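/- arXiv:2401.17649 — 4 statements merged into one kernel-verified Lean document; each statement's English description precedes it below -/
import Mathlib

section
/- Fix integers m ≥ 1 and 1 ≤ k ≤ n, and set N = m·n. On the probability space Ω = (ℕ → Fin N) with the product μ of uniform measures, fix a subset F ⊆ Fin N with |F| = n, and let ν(ω) be the least t ≥ 1 such that |D_t(ω) ∩ F| ≥ k (ν is finite μ-almost surely). Then ν is integrable and its expectation satisfies ∫ ν dμ = m·n · (H_n − H_{n−k}). (This is the expected number of uniform samples needed to recover one file under the local MDS coding scheme C₁.) -/
/-!
Write `c_t = |D_t ∩ F|` for the number of elements of `F` seen in the first `t` draws. As long as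
`F` is eventually covered, `ν > t` iff `c_t < k`, so `E ν = ∑_t P(c_t < k) = ∑_{j<k} S_j` where
`S_j = ∑_t P(c_t = j)` is the expected time spent at coverage `j`.

The coverage leaves `{c ≤ j}` exactly when `c_t = j` and the next draw hits one of the `|F| - j`
unseen elements of `F`. That draw is independent of `D_t`, so
`P(c_t ≤ j) = P(c_{t+1} ≤ j) + P(c_t = j) (|F| - j) / N`, and telescoping gives
`(∑_{t<T} P(c_t = j)) (|F| - j) / N + P(c_T ≤ j) = 1`. Hence every `S_j` with `j < |F|` is finite,
so `P(c_T = j) → 0`, so `P(c_T ≤ j) → 0`, and the identity in the limit is `S_j = N / (|F| - j)`.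
Summing over `j < k` gives `N (H_n - H_{n-k})`.
-/

open MeasureTheory ProbabilityTheory Finset
open scoped ENNReal

/-- The `j`-th harmonic number `H_j = ∑_{i=1}^j 1/i`, as a real number. -/
noncomputable def H (j : ℕ) : ℝ := ∑ i ∈ Finset.range j, (1 : ℝ) / (i + 1)

/-- The set `D_t(ω) = {ω 0, …, ω (t−1)}` of distinct values among the first `t` draws. -/
def D {N : ℕ} (t : ℕ) (ω : ℕ → Fin N) : Finset (Fin N) := (Finset.range t).image ω

/-- The first time `t ≥ 1` at which at least `k` of the drawn values lie in `F`. -/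
noncomputable def recoveryTimeLocal {N : ℕ} (k : ℕ) (F : Finset (Fin N))
    (ω : ℕ → Fin N) : ℕ :=
  sInf {t | 1 ≤ t ∧ k ≤ (D t ω ∩ F).card}

open Filter Topology

variable {N : ℕ}

lemma D_succ (t : ℕ) (ω : ℕ → Fin N) : D (t + 1) ω = insert (ω t) (D t ω) := by
  simp [D, range_add_one, image_insert]

lemma D_mono (ω : ℕ → Fin N) : Monotone fun t => D t ω :=
  fun _ _ h => image_subset_image (range_subset_range.2 h)

lemma D_eq_comp_restrict (t : ℕ) :
    D (N := N) t = (fun x : range t → Fin N => univ.image x) ∘ fun ω i => ω i := by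
  ext ω a
  simp [D]

lemma measurable_D (t : ℕ) : Measurable (D (N := N) t) := by
  rw [D_eq_comp_restrict]
  exact Measurable.of_discrete.comp (by fun_prop)

def coverage (F : Finset (Fin N)) (t : ℕ) (ω : ℕ → Fin N) : ℕ := #(D t ω ∩ F)

lemma coverage_zero (F : Finset (Fin N)) (ω : ℕ → Fin N) : coverage F 0 ω = 0 := by
  simp [coverage, D]

lemma coverage_succ (F : Finset (Fin N)) (t : ℕ) (ω : ℕ → Fin N) :
    coverage F (t + 1) ω = coverage F t ω + if ω t ∈ F \ D t ω then 1 else 0 := by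
  rw [coverage, coverage, D_succ]
  by_cases hF : ω t ∈ F
  · by_cases hD : ω t ∈ D t ω
    · simp [hD]
    · rw [insert_inter_of_mem hF, card_insert_of_notMem (by simp [hD])]
      simp [hF, hD]
  · simp [insert_inter_of_notMem hF, hF]

lemma coverage_mono (F : Finset (Fin N)) (ω : ℕ → Fin N) : Monotone fun t => coverage F t ω :=
  fun _ _ h => card_le_card (inter_subset_inter_right (D_mono ω h))

lemma measurableSet_coverage (F : Finset (Fin N)) (t : ℕ) (p : ℕ → Prop) :
    MeasurableSet {ω | p (coverage F t ω)} :=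
  measurable_D t (MeasurableSet.of_discrete (s := {B | p #(B ∩ F)}))

lemma measure_coverage_lt_eq_sum (μ : Measure (ℕ → Fin N)) (F : Finset (Fin N)) (t k : ℕ) :
    μ {ω | coverage F t ω < k} = ∑ j ∈ range k, μ {ω | coverage F t ω = j} := by
  simpa [Set.preimage] using (sum_measure_preimage_singleton (μ := μ) (range k)
    fun j _ => measurableSet_coverage F t (· = j)).symm

lemma lt_recoveryTimeLocal_iff {k : ℕ} (hk : 1 ≤ k) {F : Finset (Fin N)} {ω : ℕ → Fin N}
    (hω : ∃ s, k ≤ coverage F s ω) (t : ℕ) :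
    t < recoveryTimeLocal k F ω ↔ coverage F t ω < k := by
  have hset : {s | 1 ≤ s ∧ k ≤ #(D s ω ∩ F)} = {s | k ≤ coverage F s ω} := by
    ext s
    refine ⟨And.right, fun hs => ⟨Nat.one_le_iff_ne_zero.2 ?_, hs⟩⟩
    rintro rfl
    have h0 : k ≤ coverage F 0 ω := hs
    rw [coverage_zero] at h0
    omega
  rw [recoveryTimeLocal, hset]
  constructor
  · exact fun hlt => not_le.1 fun h =>
      (Nat.sInf_le (s := {s | k ≤ coverage F s ω}) h).not_gt hlt
  · exact fun hc => not_le.1 fun hle =>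
      hc.not_ge (le_trans (Nat.sInf_mem (s := {s | k ≤ coverage F s ω}) hω)
        (coverage_mono F ω hle))

lemma tsum_ite_lt_eq_natCast (n : ℕ) : ∑' t : ℕ, (if t < n then (1 : ℝ≥0∞) else 0) = n := by
  rw [tsum_eq_sum (s := range n) fun t ht => if_neg (by simpa using ht),
    sum_ite_of_true fun t ht => mem_range.1 ht]
  simp

structure IsIIDUniform (μ : Measure (ℕ → Fin N)) : Prop where
  iIndepFun : iIndepFun (fun t (ω : ℕ → Fin N) => ω t) μ
  measure_coord_eq : ∀ t (x : Fin N), μ {ω | ω t = x} = (N : ℝ≥0∞)⁻¹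

namespace IsIIDUniform

variable {μ : Measure (ℕ → Fin N)}

lemma indepFun_D_coord (hμ : IsIIDUniform μ) (t : ℕ) : IndepFun (D t) (fun ω => ω t) μ := by
  rw [D_eq_comp_restrict]
  have hind := hμ.iIndepFun.indepFun_finset (range t) {t} (by simp)
    fun i => measurable_pi_apply i
  exact hind.comp (Measurable.of_discrete (α := range t → Fin N))
    (measurable_pi_apply (⟨t, mem_singleton_self t⟩ : ({t} : Finset ℕ)))

lemma measure_coord_mem (hμ : IsIIDUniform μ) (t : ℕ) (S : Finset (Fin N)) :
    μ ((fun ω => ω t) ⁻¹' S) = #S / N := by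
  rw [← sum_measure_preimage_singleton _ fun _ _ =>
    measurable_pi_apply t (measurableSet_singleton _)]
  simp [Set.preimage, hμ.measure_coord_eq, div_eq_mul_inv]

lemma measure_preimage_D_inter_coord_mem (hμ : IsIIDUniform μ) (t : ℕ)
    (𝒜 : Finset (Finset (Fin N))) (φ : Finset (Fin N) → Finset (Fin N)) {c : ℕ}
    (hφ : ∀ B ∈ 𝒜, #(φ B) = c) :
    μ (D t ⁻¹' 𝒜 ∩ {ω | ω t ∈ φ (D t ω)}) = μ (D t ⁻¹' 𝒜) * (c / N) := by
  have hunion : D t ⁻¹' 𝒜 ∩ {ω | ω t ∈ φ (D t ω)} =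
      ⋃ B ∈ 𝒜, D t ⁻¹' {B} ∩ (fun ω => ω t) ⁻¹' (φ B) := by
    ext ω
    simp
  have hmeas : ∀ s : Set (Finset (Fin N)), MeasurableSet (D t ⁻¹' s) :=
    fun s => measurable_D t (.of_discrete)
  rw [hunion, measure_biUnion_finset, ← sum_measure_preimage_singleton _ fun B _ => hmeas {B},
    sum_mul]
  · refine sum_congr rfl fun B hB => ?_
    rw [(hμ.indepFun_D_coord t).measure_inter_preimage_eq_mul _ _ (.of_discrete) (.of_discrete),
      hμ.measure_coord_mem, hφ B hB]
  · intro B _ B' _ hBB'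
    exact Disjoint.mono Set.inter_subset_left Set.inter_subset_left
      ((Set.disjoint_singleton.2 hBB').preimage _)
  · exact fun B _ => (hmeas {B}).inter (measurable_pi_apply t (.of_discrete))

lemma measure_coverage_eq_inter_hit (hμ : IsIIDUniform μ) (F : Finset (Fin N)) (t i : ℕ) :
    μ ({ω | coverage F t ω = i} ∩ {ω | ω t ∈ F \ D t ω}) =
      μ {ω | coverage F t ω = i} * ((#F - i : ℕ) / N) := by
  have h𝒜 : {ω | coverage F t ω = i} = D t ⁻¹' ↑(univ.filter fun B => #(B ∩ F) = i) := by
    ext ω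
    simp [coverage]
  rw [h𝒜]
  refine hμ.measure_preimage_D_inter_coord_mem t _ (F \ ·) fun B hB => ?_
  rw [card_sdiff, (mem_filter.1 hB).2]

lemma measure_coverage_lt_succ (hμ : IsIIDUniform μ) (F : Finset (Fin N)) (t j : ℕ) :
    μ {ω | coverage F t ω < j + 1} =
      μ {ω | coverage F (t + 1) ω < j + 1} + μ {ω | coverage F t ω = j} * ((#F - j : ℕ) / N) := by
  have hsplit : {ω | coverage F t ω < j + 1} = {ω | coverage F (t + 1) ω < j + 1} ∪
      ({ω | coverage F t ω = j} ∩ {ω | ω t ∈ F \ D t ω}) := by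
    ext ω
    simp only [Set.mem_ofPred_eq, Set.mem_union, Set.mem_inter_iff, coverage_succ]
    by_cases h : ω t ∈ F \ D t ω <;> simp [h]; omega
  have hdisj : Disjoint {ω | coverage F (t + 1) ω < j + 1}
      ({ω | coverage F t ω = j} ∩ {ω | ω t ∈ F \ D t ω}) := by
    refine Set.disjoint_left.2 fun ω h1 h2 => ?_
    simp only [Set.mem_ofPred_eq, Set.mem_inter_iff, coverage_succ] at h1 h2
    rw [if_pos h2.2] at h1
    omega
  rw [hsplit, measure_union' hdisj (measurableSet_coverage F (t + 1) (· < j + 1)),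
    hμ.measure_coverage_eq_inter_hit]

variable [IsProbabilityMeasure μ]

lemma sum_measure_coverage_eq_mul_add (hμ : IsIIDUniform μ) (F : Finset (Fin N)) (j T : ℕ) :
    ∑ t ∈ range T, μ {ω | coverage F t ω = j} * ((#F - j : ℕ) / N) +
      μ {ω | coverage F T ω < j + 1} = 1 := by
  induction T with
  | zero => simp [coverage_zero]
  | succ T ih =>
    rw [← ih, hμ.measure_coverage_lt_succ F T j, sum_range_succ]
    ring

lemma tsum_measure_coverage_ne_top (hμ : IsIIDUniform μ) {F : Finset (Fin N)} {j : ℕ}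
    (hj : j < #F) : ∑' t, μ {ω | coverage F t ω = j} ≠ ∞ := by
  have hle : (∑' t, μ {ω | coverage F t ω = j}) * ((#F - j : ℕ) / N) ≤ 1 := by
    rw [← ENNReal.tsum_mul_right]
    refine ENNReal.tsum_le_of_sum_range_le fun T => ?_
    rw [← hμ.sum_measure_coverage_eq_mul_add F j T]
    exact le_self_add
  have hq : ((#F - j : ℕ) : ℝ≥0∞) / N ≠ 0 := by
    simp only [ne_eq, ENNReal.div_eq_zero_iff, Nat.cast_eq_zero, ENNReal.natCast_ne_top, or_false]
    omega
  intro htop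
  rw [htop, ENNReal.top_mul hq] at hle
  simp at hle

lemma tendsto_measure_coverage_lt (hμ : IsIIDUniform μ) {F : Finset (Fin N)} {k : ℕ}
    (hk : k ≤ #F) : Tendsto (fun T => μ {ω | coverage F T ω < k}) atTop (𝓝 0) := by
  simp_rw [measure_coverage_lt_eq_sum]
  simpa using tendsto_finsetSum (range k) fun j hj =>
    ENNReal.tendsto_atTop_zero_of_tsum_ne_top
      (hμ.tsum_measure_coverage_ne_top (lt_of_lt_of_le (mem_range.1 hj) hk))

lemma tsum_measure_coverage (hμ : IsIIDUniform μ) {F : Finset (Fin N)} {j : ℕ}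
    (hj : j < #F) : ∑' t, μ {ω | coverage F t ω = j} = N / (#F - j : ℕ) := by
  have hlim : Tendsto
      (fun T => ∑ t ∈ range T, μ {ω | coverage F t ω = j} * ((#F - j : ℕ) / N) +
        μ {ω | coverage F T ω < j + 1})
      atTop (𝓝 ((∑' t, μ {ω | coverage F t ω = j}) * ((#F - j : ℕ) / N) + 0)) := by
    rw [← ENNReal.tsum_mul_right]
    exact (ENNReal.tendsto_nat_tsum _).add (hμ.tendsto_measure_coverage_lt hj)
  simp_rw [hμ.sum_measure_coverage_eq_mul_add F j, add_zero] at hlim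
  have hone : (∑' t, μ {ω | coverage F t ω = j}) * ((#F - j : ℕ) / N) = 1 :=
    tendsto_nhds_unique hlim tendsto_const_nhds
  rw [ENNReal.eq_inv_of_mul_eq_one_left hone,
    ENNReal.inv_div (.inl (ENNReal.natCast_ne_top N))
      (.inr (Nat.cast_ne_zero.2 (Nat.sub_ne_zero_of_lt hj)))]

lemma recoveryTimeLocal_ae_eq (hμ : IsIIDUniform μ) {k : ℕ} (hk : 1 ≤ k) {F : Finset (Fin N)}
    (hkF : k ≤ #F) :
    (fun ω => (recoveryTimeLocal k F ω : ℝ≥0∞)) =ᵐ[μ]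
      fun ω => ∑' t, {ω | coverage F t ω < k}.indicator 1 ω := by
  -- `sInf ∅ = 0`, so the identity needs `F` to be covered eventually, which happens a.s.
  have hcovered : ∀ᵐ ω ∂μ, ∃ s, k ≤ coverage F s ω := by
    simp only [ae_iff, not_exists, not_le]
    exact le_zero_iff.1 (ge_of_tendsto' (hμ.tendsto_measure_coverage_lt hkF)
      fun T => measure_mono fun ω hω => Set.mem_ofPred.1 hω T)
  filter_upwards [hcovered] with ω hω
  simp only [Set.indicator_apply, Set.mem_ofPred_eq, Pi.one_apply,
    ← lt_recoveryTimeLocal_iff hk hω, tsum_ite_lt_eq_natCast]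

lemma aemeasurable_recoveryTimeLocal (hμ : IsIIDUniform μ) {k : ℕ} (hk : 1 ≤ k)
    {F : Finset (Fin N)} (hkF : k ≤ #F) :
    AEMeasurable (fun ω => (recoveryTimeLocal k F ω : ℝ≥0∞)) μ :=
  (Measurable.tsum fun t => measurable_const.indicator
    (measurableSet_coverage F t (· < k))).aemeasurable.congr
      (hμ.recoveryTimeLocal_ae_eq hk hkF).symm

lemma lintegral_recoveryTimeLocal (hμ : IsIIDUniform μ) {k : ℕ} (hk : 1 ≤ k)
    {F : Finset (Fin N)} (hkF : k ≤ #F) :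
    ∫⁻ ω, recoveryTimeLocal k F ω ∂μ = ∑ j ∈ range k, (N / (#F - j : ℕ) : ℝ≥0∞) := by
  rw [lintegral_congr_ae (hμ.recoveryTimeLocal_ae_eq hk hkF),
    lintegral_tsum (f := fun t => {ω | coverage F t ω < k}.indicator 1) fun t =>
      (measurable_const.indicator (measurableSet_coverage F t (· < k))).aemeasurable]
  simp_rw [lintegral_indicator_one (measurableSet_coverage F _ (· < k)),
    measure_coverage_lt_eq_sum]
  rw [Summable.tsum_finsetSum fun _ _ => ENNReal.summable]
  exact sum_congr rfl fun j hj => hμ.tsum_measure_coverage (by simp at hj; omega)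

end IsIIDUniform

lemma H_sub_H_sub {n k : ℕ} (hkn : k ≤ n) :
    H n - H (n - k) = ∑ j ∈ range k, 1 / ((n - j : ℕ) : ℝ) := by
  obtain ⟨l, rfl⟩ := Nat.exists_eq_add_of_le' hkn
  rw [Nat.add_sub_cancel, H, H, sum_range_add, add_sub_cancel_left, ← sum_range_reflect]
  refine sum_congr rfl fun j hj => ?_
  have hj := mem_range.1 hj
  rw [show l + k - j = l + (k - 1 - j) + 1 by omega]
  push_cast
  ring

theorem stmt_1_general (m n k : ℕ) (hk : 1 ≤ k) (hkn : k ≤ n)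
    (μ : Measure (ℕ → Fin (m * n))) [IsProbabilityMeasure μ]
    (hindep : iIndepFun (fun t (ω : ℕ → Fin (m * n)) => ω t) μ)
    (hunif : ∀ t (x : Fin (m * n)), μ {ω | ω t = x} = ((m * n : ℕ) : ℝ≥0∞)⁻¹)
    (F : Finset (Fin (m * n))) (hF : F.card = n) :
    Integrable (fun ω => (recoveryTimeLocal k F ω : ℝ)) μ ∧
      ∫ ω, (recoveryTimeLocal k F ω : ℝ) ∂μ = m * n * (H n - H (n - k)) := by
  have hμ : IsIIDUniform μ := ⟨hindep, hunif⟩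
  have hkF : k ≤ #F := hkn.trans_eq hF.symm
  have hmeas := hμ.aemeasurable_recoveryTimeLocal hk hkF
  have hlint := hμ.lintegral_recoveryTimeLocal hk hkF
  have hterm_ne_top : ∀ j ∈ range k, ((m * n : ℕ) / (#F - j : ℕ) : ℝ≥0∞) ≠ ∞ := fun j hj =>
    ENNReal.div_ne_top (ENNReal.natCast_ne_top _)
      (Nat.cast_ne_zero.2 (Nat.sub_ne_zero_of_lt ((mem_range.1 hj).trans_le hkF)))
  have hlint_ne_top : ∫⁻ ω, (recoveryTimeLocal k F ω : ℝ≥0∞) ∂μ ≠ ∞ := by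
    rw [hlint]
    exact ENNReal.sum_ne_top.2 hterm_ne_top
  refine ⟨by simpa using integrable_toReal_of_lintegral_ne_top hmeas hlint_ne_top, ?_⟩
  have hint := integral_toReal hmeas (ae_of_all _ fun ω => ENNReal.natCast_lt_top _)
  simp only [ENNReal.toReal_natCast] at hint
  rw [hint, hlint, ENNReal.toReal_sum hterm_ne_top, H_sub_H_sub hkn, mul_sum, hF]
  refine sum_congr rfl fun j _ => ?_
  rw [ENNReal.toReal_div, ENNReal.toReal_natCast, ENNReal.toReal_natCast, Nat.cast_mul,
    mul_one_div]

theorem stmt_1 (m n k : ℕ) (hm : 1 ≤ m) (hk : 1 ≤ k) (hkn : k ≤ n)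
    (μ : Measure (ℕ → Fin (m * n))) [IsProbabilityMeasure μ]
    (hindep : iIndepFun (fun t (ω : ℕ → Fin (m * n)) => ω t) μ)
    (hunif : ∀ t (x : Fin (m * n)), μ {ω | ω t = x} = ((m * n : ℕ) : ℝ≥0∞)⁻¹)
    (F : Finset (Fin (m * n))) (hF : F.card = n) :
    Integrable (fun ω => (recoveryTimeLocal k F ω : ℝ)) μ ∧
      ∫ ω, (recoveryTimeLocal k F ω : ℝ) ∂μ = m * n * (H n - H (n - k)) :=
  stmt_1_general m n k hk hkn μ hindep hunif F hF
end

section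
/- Fix integers m ≥ 1 and k ≥ 2. Then the quantity m·n·(H_{mn} − H_{mn−mk}) − (m·n / C(mn, k)) · ( ∑_{j=0}^{mk−k−1} C(k−1+j, k−1) · H_{mn−(k+j)} − H_{mn−mk} · C(mk−1, k) ) tends to m·k as n → ∞ (along the filter atTop on ℕ, restricted to n ≥ k). -/
/-!
The first term is `∑_{i<mk} mn / (mn - mk + i + 1)`, a sum of `mk` terms each tending to `1`.
The second term tends to `0`: its prefactor is at most `mn / C(mn, 2) = 2 / (mn - 1)` once
`2k ≤ mn`, while the bracket is a fixed linear combination of harmonic numbers `H_j ≤ 1 + log (mn)`.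
-/

open Filter

open Finset Topology

lemma H_nonneg (j : ℕ) : 0 ≤ H j :=
  sum_nonneg fun _ _ => by positivity

lemma H_mono : Monotone H := fun _ _ hab =>
  sum_le_sum_of_subset_of_nonneg (range_subset_range.2 hab) fun _ _ _ => by positivity

lemma H_le_one_add_log (j : ℕ) : H j ≤ 1 + Real.log j := by
  have : H j = harmonic j := by simp [H, harmonic, one_div]
  rw [this]
  exact_mod_cast harmonic_le_one_add_log j

lemma H_sub_H_sub_eq_sum {c N : ℕ} (hc : c ≤ N) :
    H N - H (N - c) = ∑ i ∈ range c, (1 : ℝ) / ((N - c + i : ℕ) + 1) := by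
  rw [H, H, ← sum_Ico_eq_sub _ (Nat.sub_le N c), sum_Ico_eq_sum_range, Nat.sub_sub_self hc]

lemma tendsto_mul_H_sub_H_sub (c : ℕ) :
    Tendsto (fun N : ℕ => (N : ℝ) * (H N - H (N - c))) atTop (𝓝 c) := by
  have hterm (i : ℕ) : Tendsto (fun N : ℕ => (N : ℝ) / ((N - c + i : ℕ) + 1)) atTop (𝓝 1) := by
    refine (tendsto_natCast_div_add_atTop ((i : ℝ) + 1 - c)).congr' ?_
    filter_upwards [eventually_ge_atTop c] with N hN
    rw [Nat.cast_add, Nat.cast_sub hN]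
    ring_nf
  have hsum := tendsto_finsetSum (range c) fun i _ => hterm i
  simp only [sum_const, card_range, nsmul_eq_mul, mul_one] at hsum
  refine hsum.congr' ?_
  filter_upwards [eventually_ge_atTop c] with N hN
  simp only [H_sub_H_sub_eq_sum hN, mul_sum, mul_one_div]

lemma choose_two_le_choose {n r : ℕ} (h2 : 2 ≤ r) (hr : r ≤ n / 2) :
    n.choose 2 ≤ n.choose r := by
  induction r, h2 using Nat.le_induction with
  | base => exact le_rfl
  | succ s _ ih => exact (ih (by omega)).trans (Nat.choose_le_succ_of_lt_half_left (by omega))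

lemma natCast_div_choose_le {N k : ℕ} (hk : 2 ≤ k) (hN : 2 * k ≤ N) :
    (N : ℝ) / N.choose k ≤ 2 / (N - 1) := by
  have hN1 : (1 : ℝ) < N := by exact_mod_cast (by omega : 1 < N)
  have hchoose : (N.choose 2 : ℝ) ≤ N.choose k := by
    exact_mod_cast choose_two_le_choose hk (by omega)
  calc (N : ℝ) / N.choose k ≤ N / N.choose 2 := by
        gcongr
        exact_mod_cast Nat.choose_pos (by omega)
    _ = 2 / (N - 1) := by
        rw [Nat.cast_choose_two]
        have : (N : ℝ) - 1 ≠ 0 := by linarith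
        field_simp

lemma tendsto_one_add_log_div_sub_one :
    Tendsto (fun x : ℝ => (1 + Real.log x) / (x - 1)) atTop (𝓝 0) := by
  have h := (Real.tendsto_pow_log_div_mul_add_atTop 1 (-1) 0 one_ne_zero).add
    (Real.tendsto_pow_log_div_mul_add_atTop 1 (-1) 1 one_ne_zero)
  rw [add_zero] at h
  refine h.congr fun x => ?_
  simp only [pow_zero, pow_one, one_mul, ← sub_eq_add_neg, add_div]

lemma tendsto_div_choose_mul_H_sub {k : ℕ} (hk : 2 ≤ k) (b : ℕ) :
    Tendsto (fun N : ℕ => (N : ℝ) / N.choose k * H (N - b)) atTop (𝓝 0) := by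
  have hbound := (tendsto_one_add_log_div_sub_one.comp tendsto_natCast_atTop_atTop).const_mul 2
  rw [mul_zero] at hbound
  refine squeeze_zero' (Eventually.of_forall fun N => by have := H_nonneg (N - b); positivity)
    ?_ hbound
  filter_upwards [eventually_ge_atTop (2 * k)] with N hN
  have hN1 : (0 : ℝ) < N - 1 := by
    have : (1 : ℝ) < N := by exact_mod_cast (by omega : 1 < N)
    linarith
  calc (N : ℝ) / N.choose k * H (N - b) ≤ 2 / (N - 1) * (1 + Real.log N) := by
        refine mul_le_mul (natCast_div_choose_le hk hN)
          ((H_mono (Nat.sub_le N b)).trans (H_le_one_add_log N)) (H_nonneg _) (by positivity)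
    _ = 2 * ((1 + Real.log N) / (N - 1)) := by ring

theorem stmt_6 (m k : ℕ) (hm : 1 ≤ m) (hk : 2 ≤ k) :
    Tendsto
      (fun n : ℕ =>
        (m : ℝ) * n * (H (m * n) - H (m * n - m * k)) -
          ((m : ℝ) * n / ((m * n).choose k)) *
            (∑ j ∈ Finset.range (m * k - k),
                ((k - 1 + j).choose (k - 1) : ℝ) * H (m * n - (k + j)) -
              H (m * n - m * k) * ((m * k - 1).choose k)))
      atTop (nhds ((m : ℝ) * k)) := by
  have hmn : Tendsto (fun n : ℕ => m * n) atTop atTop :=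
    tendsto_id.const_mul_atTop' (by omega)
  have hmain := (tendsto_mul_H_sub_H_sub (m * k)).comp hmn
  have hcorr : Tendsto (fun N : ℕ => (N : ℝ) / N.choose k *
      (∑ j ∈ range (m * k - k), ((k - 1 + j).choose (k - 1) : ℝ) * H (N - (k + j)) -
        H (N - m * k) * ((m * k - 1).choose k))) atTop (𝓝 0) := by
    have h := (tendsto_finsetSum (range (m * k - k)) fun j _ =>
        (tendsto_div_choose_mul_H_sub hk (k + j)).const_mul ((k - 1 + j).choose (k - 1) : ℝ)).sub
      ((tendsto_div_choose_mul_H_sub hk (m * k)).mul_const ((m * k - 1).choose k : ℝ))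
    simp only [mul_zero, zero_mul, sum_const_zero, sub_zero] at h
    refine h.congr fun N => ?_
    rw [mul_sub, mul_sum, mul_assoc]
    exact congrArg (· - _) (sum_congr rfl fun j _ => mul_left_comm _ _ _)
  simpa using hmain.sub (hcorr.comp hmn)
end

section
/- Let m, n, k be integers with m ≥ 1 and 1 ≤ k ≤ n. Then m·n·H_{mn} − n·∑_{i=1}^{m} H_{mn−k·i} ≥ k·(m+1)/2. (This is the lower bound on the expected number of samples T(n,k;m,1) needed to recover one of m files, and it refines the bound k(m+1)/2.) -/
/-! Each of the `k i` terms of `H_{mn} - H_{mn - k i}` is at least `1/(mn)`, so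
`mn (H_{mn} - H_{mn - k i}) ≥ k i`; summing over `i = 1, …, m` gives
`m (mn H_{mn} - n ∑ H_{mn - k i}) ≥ k m (m + 1) / 2`. -/

open Finset

lemma H_sub_H_sub_eq_sum_Ico (N a : ℕ) :
    H N - H (N - a) = ∑ j ∈ Ico (N - a) N, (1 : ℝ) / (j + 1) :=
  (sum_Ico_eq_sub _ (Nat.sub_le N a)).symm

lemma le_mul_H_sub_H_sub {N a : ℕ} (h : a ≤ N) : (a : ℝ) ≤ N * (H N - H (N - a)) := by
  rw [H_sub_H_sub_eq_sum_Ico, mul_sum]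
  have hterm : ∀ j ∈ Ico (N - a) N, (1 : ℝ) ≤ N * (1 / (j + 1)) := by
    intro j hj
    have hjN : (j : ℝ) + 1 ≤ N := by exact_mod_cast (mem_Ico.mp hj).2
    rw [mul_one_div, one_le_div (by positivity)]
    exact hjN
  simpa [Nat.sub_sub_self h] using card_nsmul_le_sum _ _ _ hterm

lemma sum_Icc_one_cast_mul_two (m : ℕ) : (∑ i ∈ Icc 1 m, (i : ℝ)) * 2 = m * (m + 1) := by
  induction m with
  | zero => simp
  | succ p ih =>
    rw [sum_Icc_succ_top (by omega), add_mul, ih]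
    push_cast
    ring

theorem stmt_7_general (m n k : ℕ) (hm : 1 ≤ m) (hkn : k ≤ n) :
    (m : ℝ) * n * H (m * n) - n * ∑ i ∈ Finset.Icc 1 m, H (m * n - k * i) ≥
      k * (m + 1) / 2 := by
  have hterm : ∀ i ∈ Icc 1 m, (k : ℝ) * i ≤ m * n * (H (m * n) - H (m * n - k * i)) := by
    intro i hi
    have hki : k * i ≤ m * n := by
      rw [mul_comm m]
      exact Nat.mul_le_mul hkn (mem_Icc.mp hi).2
    exact_mod_cast le_mul_H_sub_H_sub hki
  have hsum : (m : ℝ) * (k * (m + 1) / 2) ≤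
      m * ((m : ℝ) * n * H (m * n) - n * ∑ i ∈ Icc 1 m, H (m * n - k * i)) := by
    calc (m : ℝ) * (k * (m + 1) / 2) = ∑ i ∈ Icc 1 m, (k : ℝ) * i := by
          rw [← mul_sum]
          linear_combination -(k : ℝ) / 2 * sum_Icc_one_cast_mul_two m
      _ ≤ ∑ i ∈ Icc 1 m, (m : ℝ) * n * (H (m * n) - H (m * n - k * i)) := sum_le_sum hterm
      _ = _ := by
          rw [← mul_sum, sum_sub_distrib, sum_const, Nat.card_Icc, nsmul_eq_mul]
          push_cast
          ring
  exact le_of_mul_le_mul_left hsum (by exact_mod_cast hm)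

theorem stmt_7 (m n k : ℕ) (hm : 1 ≤ m) (hk : 1 ≤ k) (hkn : k ≤ n) :
    (m : ℝ) * n * H (m * n) - n * ∑ i ∈ Finset.Icc 1 m, H (m * n - k * i) ≥
      k * (m + 1) / 2 :=
  stmt_7_general m n k hm hkn
end

section
/- Let n, k be integers with 1 ≤ k ≤ n. Then ∑_{j=0}^{k−1} C(k−1+j, k−1) · (H_{2n−(k+j)} − H_{2n−2k}) = ∑_{t=0}^{k−1} C(2k−1−t, k) / (2n − 2k + t + 1). -/
lemma Hdiff (m s : ℕ) : H (m + s) - H m = ∑ t ∈ Finset.range s, (1:ℝ)/(m + t + 1) := by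
  unfold H
  rw [Finset.sum_range_add, add_sub_cancel_left]
  refine Finset.sum_congr rfl fun x _ => ?_
  push_cast
  ring

lemma hockey (r : ℕ) : ∀ s : ℕ, ∑ j ∈ Finset.range s, (r + j).choose r = (r + s).choose (r+1) := by
  intro s
  induction s with
  | zero => simp
  | succ s ih =>
    rw [Finset.sum_range_succ, ih, ← Nat.add_assoc, Nat.choose_succ_succ, Nat.succ_eq_add_one]
    omega

theorem stmt_12 (n k : ℕ) (hk : 1 ≤ k) (hkn : k ≤ n) :
    ∑ j ∈ Finset.range k,
        ((k - 1 + j).choose (k - 1) : ℝ) * (H (2 * n - (k + j)) - H (2 * n - 2 * k)) =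
      ∑ t ∈ Finset.range k,
        ((2 * k - 1 - t).choose k : ℝ) / (2 * (n : ℝ) - 2 * k + t + 1) := by
  obtain ⟨m, hm⟩ : ∃ m, 2*n = 2*k + m := ⟨2*n - 2*k, by omega⟩
  have key : ∀ j ∈ Finset.range k, ((k - 1 + j).choose (k - 1) : ℝ) * (H (2 * n - (k + j)) - H (2 * n - 2 * k))
      = ∑ t ∈ Finset.range k, (if t < k - j then ((k-1+j).choose (k-1):ℝ) * (1/((m:ℝ)+t+1)) else 0) := by
    intro j hj
    have hj' : j < k := Finset.mem_range.mp hj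
    rw [show 2*n - (k+j) = m + (k - j) by omega, show 2*n - 2*k = m by omega, Hdiff,
      Finset.mul_sum]
    rw [Finset.sum_ite, Finset.sum_const_zero, add_zero]
    apply Finset.sum_congr
    · ext t; simp only [Finset.mem_filter, Finset.mem_range]; omega
    · intros; rfl
  rw [Finset.sum_congr rfl key, Finset.sum_comm]
  apply Finset.sum_congr rfl
  intro t ht
  have ht' : t < k := Finset.mem_range.mp ht
  rw [Finset.sum_ite, Finset.sum_const_zero, add_zero]
  have hf : Finset.filter (fun j => t < k - j) (Finset.range k) = Finset.range (k - t) := by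
    ext j; simp only [Finset.mem_filter, Finset.mem_range]; omega
  rw [hf, ← Finset.sum_mul, ← Nat.cast_sum]
  have : ∑ j ∈ Finset.range (k - t), ((k-1) + j).choose (k-1) = (2*k - 1 - t).choose k := by
    rw [hockey]
    congr 1 <;> omega
  rw [this]
  have hd : 2 * (n : ℝ) - 2 * k + t + 1 = (m:ℝ) + t + 1 := by
    have : (2*n : ℝ) = 2*k + m := by exact_mod_cast congrArg (Nat.cast : ℕ → ℝ) hm
    push_cast at this ⊢
    linarith
  rw [hd]
  ring
end
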